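/- arXiv:1611.06825 — 3 statements merged into one kernel-verified Lean document; each statement's English description precedes it below -/
import Mathlib

section
/- Let $w, w' \in \tilde W$ with $w \to w'$ (i.e. $w'$ is obtained from $w$ by a sequence of conjugations by simple reflections, each not increasing length). If moreover $\ell(w) = \ell(w')$, then also $w' \to w$; that is, $w \approx w'$. -/
/-- One step of the conjugation relation: `w →ˢ w'` iff `w' = s w s` for a simple
reflection `s ∈ S` with `ℓ w' ≤ ℓ w`. -/
def ConjStep {W : Type*} [Group W] (S : Set W) (ℓ : W → ℕ) (w w' : W) : Prop :=
  ∃ s ∈ S, w' = s * w * s ∧ ℓ w' ≤ ℓ w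

namespace ConjStep

variable {W : Type*} [Group W] {S : Set W} {ℓ : W → ℕ} {w w' : W}

theorem length_le (h : ConjStep S ℓ w w') : ℓ w' ≤ ℓ w :=
  h.choose_spec.2.2

theorem length_le_of_reflTransGen (h : Relation.ReflTransGen (ConjStep S ℓ) w w') :
    ℓ w' ≤ ℓ w := by
  induction h with
  | refl => exact le_rfl
  | tail _ hstep ih => exact hstep.length_le.trans ih

theorem reverse (hS : ∀ s ∈ S, s * s = 1) (h : ConjStep S ℓ w w') (hle : ℓ w ≤ ℓ w') :
    ConjStep S ℓ w' w := by
  obtain ⟨s, hs, rfl, -⟩ := h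
  refine ⟨s, hs, ?_, hle⟩
  rw [← mul_assoc, ← mul_assoc, hS s hs, one_mul, mul_assoc, hS s hs, mul_one]

end ConjStep

/-- If `w → w'` (a chain of length-non-increasing conjugations by simple reflections)
and `ℓ w = ℓ w'`, then also `w' → w`; that is, `w ≈ w'`. -/
theorem to_reverse_of_length_eq
    {W : Type*} [Group W] (S : Set W) (hS : ∀ s ∈ S, s * s = 1) (ℓ : W → ℕ)
    (w w' : W)
    (hto : Relation.ReflTransGen (ConjStep S ℓ) w w')
    (hlen : ℓ w = ℓ w') :
    Relation.ReflTransGen (ConjStep S ℓ) w' w := by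
  induction hto with
  | refl => exact .refl
  | @tail u v hwu huv ih =>
    -- every length along the chain lies between `ℓ w'` and `ℓ w`, which agree
    have hvu : ℓ v = ℓ u :=
      le_antisymm huv.length_le (hlen ▸ ConjStep.length_le_of_reflTransGen hwu)
    exact .head (huv.reverse hS hvu.ge) (ih (hlen.trans hvu))
end

section
/- Let $(x, K, u)$ be a standard triple in $\tilde W$ with $\mathrm{Ad}(x)(K) = K$ and $u \in W_K$. Then the element $ux$ has the same Newton point as $x$: $\nu_{ux} = \nu_x$, and hence $\bar\nu_{ux} = \bar\nu_x$. -/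
/-!
Since `x` normalizes the finite group `W_K`, `(u x) ^ n = v x ^ n` with
`v = u (x u x⁻¹) ⋯ (x ^ (n - 1) u x ^ (1 - n)) ∈ W_K`. For `n = #W₀` both `x ^ n` and
`(u x) ^ n` are translations, so `v` is a translation of finite order, hence trivial
because the lattice is torsion-free.
-/

namespace Subgroup

variable {G : Type*} [Group G] {H : Subgroup G} {x u : G}

theorem mul_pow_mul_inv_pow_mem_of_mem_normalizer (hx : x ∈ normalizer (H : Set G)) (hu : u ∈ H)
    (n : ℕ) : (u * x) ^ n * (x ^ n)⁻¹ ∈ H := by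
  induction n with
  | zero => simp
  | succ n ih =>
    have hconj : x ^ n * u * (x ^ n)⁻¹ ∈ H := (mem_normalizer_iff.1 (pow_mem hx n) u).1 hu
    have hsplit : (u * x) ^ (n + 1) * (x ^ (n + 1))⁻¹
        = (u * x) ^ n * (x ^ n)⁻¹ * (x ^ n * u * (x ^ n)⁻¹) := by
      rw [pow_succ, pow_succ]; group
    rw [hsplit]
    exact mul_mem ih hconj

end Subgroup

section Translations

variable {W Λ : Type*} [Group W] [AddCommGroup Λ] {t : Λ → W}

theorem eq_zero_of_isOfFinOrder_apply (ht : ∀ a b : Λ, t (a + b) = t a * t b)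
    (htinj : Function.Injective t) (htor : ∀ (n : ℕ) (a : Λ), 0 < n → n • a = 0 → a = 0)
    {a : Λ} (ha : IsOfFinOrder (t a)) : a = 0 := by
  let f : Multiplicative Λ →* W :=
    MonoidHom.mk' (t ∘ Multiplicative.toAdd) fun a b => ht a.toAdd b.toAdd
  obtain ⟨n, hn, hpow⟩ := ha.exists_pow_eq_one
  refine htor n a hn (htinj ?_)
  change f (.ofAdd (n • a)) = f 1
  rw [ofAdd_nsmul, map_pow, map_one]
  exact hpow

theorem eq_of_isOfFinOrder_mul_inv (ht : ∀ a b : Λ, t (a + b) = t a * t b)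
    (htinj : Function.Injective t) (htor : ∀ (n : ℕ) (a : Λ), 0 < n → n • a = 0 → a = 0)
    {a b : Λ} (hab : IsOfFinOrder (t a * (t b)⁻¹)) : a = b := by
  have hsub : t (a - b) = t a * (t b)⁻¹ := eq_mul_inv_of_mul_eq (by rw [← ht, sub_add_cancel])
  rw [← hsub] at hab
  exact sub_eq_zero.1 (eq_zero_of_isOfFinOrder_apply ht htinj htor hab)

end Translations

theorem newton_point_of_ux_eq_newton_point_of_x_general
    {W : Type*} [Group W] {W0 : Type*} [Group W0] [Finite W0]
    {Λ : Type*} [AddCommGroup Λ]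
    (t : Λ → W) (ht : ∀ a b : Λ, t (a + b) = t a * t b)
    (htinj : Function.Injective t)
    (htor : ∀ (n : ℕ) (a : Λ), 0 < n → n • a = 0 → a = 0)
    (p : W →* W0) (hexact : ∀ w : W, p w = 1 ↔ ∃ lam : Λ, w = t lam)
    (K : Set W) (hfin : (Subgroup.closure K : Set W).Finite)
    (x : W)
    (hAd : (fun k => x * k * x⁻¹) '' K = K)
    (u : W) (hu : u ∈ Subgroup.closure K) :
    ∃ l : ℕ, 0 < l ∧ ∃ lam : Λ, x ^ l = t lam ∧ (u * x) ^ l = t lam := by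
  set l := Nat.card W0
  obtain ⟨lam, hlam⟩ : ∃ lam, x ^ l = t lam :=
    (hexact _).1 (by rw [map_pow, pow_card_eq_one'])
  obtain ⟨mu, hmu⟩ : ∃ mu, (u * x) ^ l = t mu :=
    (hexact _).1 (by rw [map_pow, pow_card_eq_one'])
  have hx : x ∈ Subgroup.normalizer (Subgroup.closure K : Set W) :=
    Subgroup.normalizer_le_normalizer_closure K
      (Subgroup.mem_normalizer_iff_conj_image_eq.2 hAd)
  have hv := Subgroup.mul_pow_mul_inv_pow_mem_of_mem_normalizer hx hu l
  have : Finite (Subgroup.closure K) := hfin.to_subtype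
  have hfo : IsOfFinOrder ((u * x) ^ l * (x ^ l)⁻¹) :=
    Submonoid.isOfFinOrder_coe.2 (isOfFinOrder_of_finite (⟨_, hv⟩ : Subgroup.closure K))
  rw [hmu, hlam] at hfo
  exact ⟨l, Nat.card_pos, lam, hlam, by rw [hmu, eq_of_isOfFinOrder_mul_inv ht htinj htor hfo]⟩

/-- Let `(x, K, u)` be a standard triple in an extended affine Weyl group
(encoded by a translation embedding `t : Λ → W` of a torsion-free lattice and a
projection `p` onto a finite group `W0` with kernel the translations): `x` is
straight, `W_K = ⟨K⟩` is finite, `x` has minimal length in `W_K x`,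
`Ad(x)(K) = K` and `u ∈ W_K`.  Then `u x` has the same Newton point as `x`:
there are `l > 0` and `λ` with `x ^ l = t λ` and `(u x) ^ l = t λ`
(so `ν_{ux} = ν_x = λ / l`, and hence also `ν̄_{ux} = ν̄_x`). -/
theorem newton_point_of_ux_eq_newton_point_of_x
    {W : Type*} [Group W] {W0 : Type*} [Group W0] [Finite W0]
    {Λ : Type*} [AddCommGroup Λ]
    (t : Λ → W) (ht : ∀ a b : Λ, t (a + b) = t a * t b)
    (htinj : Function.Injective t)
    (htor : ∀ (n : ℕ) (a : Λ), 0 < n → n • a = 0 → a = 0)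
    (p : W →* W0) (hexact : ∀ w : W, p w = 1 ↔ ∃ lam : Λ, w = t lam)
    (ℓ : W → ℕ)
    (K : Set W) (hfin : (Subgroup.closure K : Set W).Finite)
    (x : W) (hstraight : ∀ n : ℕ, ℓ (x ^ n) = n * ℓ x)
    (hmin : ∀ v ∈ Subgroup.closure K, ℓ x ≤ ℓ (v * x))
    (hAd : (fun k => x * k * x⁻¹) '' K = K)
    (u : W) (hu : u ∈ Subgroup.closure K) :
    ∃ l : ℕ, 0 < l ∧ ∃ lam : Λ, x ^ l = t lam ∧ (u * x) ^ l = t lam :=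
  newton_point_of_ux_eq_newton_point_of_x_general t ht htinj htor p hexact K hfin x hAd u hu
end

section
/- Let $w \in \tilde W$ be an element of minimal length in its conjugacy class, and suppose $w \rightharpoonup w'$ via steps $\overset{s}\rightharpoonup$. Then every step is a conjugation step of equal length, so $w'$ is conjugate to $w$ and $\ell(w') = \ell(w)$. -/
/-- One step of `⇀`: either a conjugation step `w' = s w s` with `ℓ w' ≤ ℓ w`,
or `w' = s w` with `ℓ (s w s) < ℓ w`. -/
def HarpoonStep {W : Type*} [Group W] (S : Set W) (ℓ : W → ℕ) (w w' : W) : Prop :=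
  ∃ s ∈ S, (w' = s * w * s ∧ ℓ w' ≤ ℓ w) ∨ (w' = s * w ∧ ℓ (s * w * s) < ℓ w)

/-- Let `w` have minimal length in its conjugacy class and suppose `w ⇀ w'`.
Then every step is in fact a conjugation step of equal length; hence `w'` is
conjugate to `w`, `ℓ w' = ℓ w`, `w ≈ w'` (both `w → w'` and `w' → w` via
length-non-increasing conjugation steps), and `w'` again has minimal length in
its conjugacy class. -/
theorem minimal_length_harpoon
    {W : Type*} [Group W] (S : Set W) (hS : ∀ s ∈ S, s * s = 1) (ℓ : W → ℕ)
    (hdeg : ∀ s ∈ S, ∀ w : W,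
      (ℓ (s * w * s) : ℤ) = (ℓ w : ℤ) - 2 ∨ (ℓ (s * w * s) : ℤ) = (ℓ w : ℤ) ∨
        (ℓ (s * w * s) : ℤ) = (ℓ w : ℤ) + 2)
    (w w' : W)
    (hmin : ∀ x : W, ℓ w ≤ ℓ (x * w * x⁻¹))
    (hto : Relation.ReflTransGen (HarpoonStep S ℓ) w w') :
    (∃ x : W, w' = x * w * x⁻¹) ∧ ℓ w' = ℓ w ∧
      Relation.ReflTransGen (ConjStep S ℓ) w w' ∧
      Relation.ReflTransGen (ConjStep S ℓ) w' w ∧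
      (∀ x : W, ℓ w' ≤ ℓ (x * w' * x⁻¹)) := by
  induction hto with
  | refl =>
    exact ⟨⟨1, by group⟩, rfl, .refl, .refl, hmin⟩
  | @tail b c hab hbc ih =>
    obtain ⟨⟨x, hx⟩, hlen, hfwd, hbwd, hbmin⟩ := ih
    obtain ⟨s, hs, hcase⟩ := hbc
    have hss := hS s hs
    have hsinv : s⁻¹ = s := inv_eq_of_mul_eq_one_right hss
    rcases hcase with ⟨hc, hle⟩ | ⟨hc, hlt⟩
    · have hge : ℓ b ≤ ℓ c := by
        have := hbmin s
        rwa [hsinv, ← hc] at this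
      have heq : ℓ c = ℓ b := le_antisymm hle hge
      refine ⟨⟨s * x, ?_⟩, by omega, hfwd.tail ⟨s, hs, hc, hle⟩,
        Relation.ReflTransGen.head ⟨s, hs, ?_, hge⟩ hbwd, ?_⟩
      · rw [hc, hx, mul_inv_rev, hsinv]; group
      · rw [hc]
        calc b = (s * s) * b * (s * s) := by rw [hss]; group
          _ = s * (s * b * s) * s := by group
      · intro y
        calc ℓ c = ℓ b := heq
          _ ≤ ℓ (y * s * b * (y * s)⁻¹) := hbmin (y * s)
          _ = ℓ (y * c * y⁻¹) := by
              congr 1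
              rw [hc, mul_inv_rev, hsinv]
              group
    · exfalso
      have := hbmin s
      rw [hsinv] at this
      omega
end
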